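/- Let P be a ground normal logic program and f its Boolean network encoding. Then the set of supported models of P (equivalently, models of the Clark completion of P) coincides with the set of fixed points of f. -/

import Mathlib

/-- A rule of a ground normal logic program. -/
structure Rule (V : Type*) where
  head : V
  pbody : Finset V
  nbody : Finset V
deriving DecidableEq

variable {V : Type*} [DecidableEq V] [Fintype V]

/-- The body formula of a rule holds in state `x`. -/
def bodySat (r : Rule V) (x : V → Bool) : Prop :=
  (∀ p ∈ r.pbody, x p = true) ∧ (∀ p ∈ r.nbody, x p = false)

instance (r : Rule V) (x : V → Bool) : Decidable (bodySat r x) := by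
  unfold bodySat; infer_instance

/-- The Boolean network encoding of a logic program. -/
def enc (P : Finset (Rule V)) (v : V) (x : V → Bool) : Bool :=
  decide (∃ r ∈ P, r.head = v ∧ bodySat r x)

/-- Positive arc of the dependence graph. -/
def posDG (P : Finset (Rule V)) (u v : V) : Prop :=
  ∃ r ∈ P, r.head = v ∧ u ∈ r.pbody

/-- Negative arc of the dependence graph. -/
def negDG (P : Finset (Rule V)) (u v : V) : Prop :=
  ∃ r ∈ P, r.head = v ∧ u ∈ r.nbody

/-- Positive arc of the influence graph of a Boolean network. -/
def posIG (f : V → (V → Bool) → Bool) (u v : V) : Prop :=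
  ∃ x : V → Bool, f v (Function.update x u false) = false ∧ f v (Function.update x u true) = true

/-- Negative arc of the influence graph of a Boolean network. -/
def negIG (f : V → (V → Bool) → Bool) (u v : V) : Prop :=
  ∃ x : V → Bool, f v (Function.update x u false) = true ∧ f v (Function.update x u true) = false

/-- `y` is a Herbrand model of the reduct of `P` with respect to `x`. -/
def modelsReduct (P : Finset (Rule V)) (x y : V → Bool) : Prop :=
  ∀ r ∈ P, (∀ p ∈ r.nbody, x p = false) → (∀ p ∈ r.pbody, y p = true) → y r.head = true

/-- `x` is a stable model of `P`: it is the least Herbrand model of the reduct `P^x`. -/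
def isStable (P : Finset (Rule V)) (x : V → Bool) : Prop :=
  modelsReduct P x x ∧ ∀ y : V → Bool, modelsReduct P x y → ∀ v, x v = true → y v = true

/--  is a Herbrand model of . -/
def isHerbrandModel {V : Type*} [DecidableEq V] (P : Finset (Rule V)) (x : V → Bool) : Prop :=
  ∀ r ∈ P, bodySat r x → x r.head = true

/--  is a supported model of . -/
def isSupported {V : Type*} [DecidableEq V] (P : Finset (Rule V)) (x : V → Bool) : Prop :=
  isHerbrandModel P x ∧ ∀ v : V, x v = true → ∃ r ∈ P, r.head = v ∧ bodySat r x

theorem enc_eq_true_iff (P : Finset (Rule V)) (v : V) (x : V → Bool) :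
    enc P v x = true ↔ ∃ r ∈ P, r.head = v ∧ bodySat r x :=
  decide_eq_true_iff

theorem isHerbrandModel_iff_enc_imp (P : Finset (Rule V)) (x : V → Bool) :
    isHerbrandModel P x ↔ ∀ v, enc P v x = true → x v = true := by
  simp only [enc_eq_true_iff]
  constructor
  · rintro hmodel v ⟨r, hr, rfl, hbody⟩
    exact hmodel r hr hbody
  · intro hmodel r hr hbody
    exact hmodel r.head ⟨r, hr, rfl, hbody⟩

theorem isSupported_iff_enc_iff (P : Finset (Rule V)) (x : V → Bool) :
    isSupported P x ↔ ∀ v, enc P v x = true ↔ x v = true := by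
  simp only [isSupported, isHerbrandModel_iff_enc_imp, iff_def, forall_and, enc_eq_true_iff]

/-- supported models of  coincide with fixed points of its BN encoding. -/
theorem stmt1 {V : Type*} [DecidableEq V] [Fintype V] (P : Finset (Rule V)) (x : V → Bool) :
    isSupported P x ↔ (∀ v : V, enc P v x = x v) :=
  (isSupported_iff_enc_iff P x).trans (forall_congr' fun _ => Bool.eq_iff_iff.symm)
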